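/- In M_{2ⁿ}(ℂ), define c_m = 2^m Σ_{k=1}^{2^{m-1}} p^{(m)}_{2k-1} + Σ_{k=1}^{2^{m-1}} p^{(m)}_{2k} where p^{(m)}_j denotes the image in M_{2ⁿ}(ℂ) (under the iterated doubling embeddings) of the j-th diagonal matrix unit of M_{2^m}(ℂ), for 1 ≤ m ≤ n. Set a_n = c_1 c_2 ⋯ c_n. Then a_n is a diagonal matrix a_n = Σ_{k=1}^{2ⁿ} γ_k e_{kk} whose diagonal entries satisfy γ_{2k-1} = 2ⁿ γ_{2k} for all k = 1, …, 2^{n-1}. -/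
import Mathlib


/-- Doubling embedding of indices (0-indexed: `k ↦ 2k + b.toNat`). -/
def emb (n : ℕ) (b : Bool) (k : Fin (2 ^ n)) : Fin (2 ^ (n + 1)) :=
  ⟨2 * k.val + b.toNat, by
    have hk := k.isLt
    have h : 2 ^ (n + 1) = 2 ^ n * 2 := pow_succ 2 n
    have hb : b.toNat ≤ 1 := by cases b <;> simp
    omega⟩

/-- The image in `M_{2^n}(ℂ)` of `c_m = 2^m Σ_k p^{(m)}_{2k-1} + Σ_k p^{(m)}_{2k}`
under the iterated doubling embeddings: the image of the `j`-th (1-indexed)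
diagonal matrix unit `p^{(m)}_j` of `M_{2^m}(ℂ)` is the diagonal projection onto
the indices `i` with `i / 2^(n-m) = j - 1` (0-indexed), and `j` is odd exactly
when `(i / 2^(n-m)) % 2 = 0`. -/
noncomputable def cMat (n m : ℕ) : Matrix (Fin (2 ^ n)) (Fin (2 ^ n)) ℂ :=
  Matrix.diagonal fun i => if (i.val / 2 ^ (n - m)) % 2 = 0 then (2 ^ m : ℂ) else 1

/-- `a_n = c_1 c_2 ⋯ c_n` in `M_{2^n}(ℂ)`. -/
noncomputable def aMat (n : ℕ) : Matrix (Fin (2 ^ n)) (Fin (2 ^ n)) ℂ :=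
  ((List.range n).map fun m => cMat n (m + 1)).prod

lemma diag_list_prod {N : Type*} [DecidableEq N] [Fintype N]
    (l : List ℕ) (f : ℕ → N → ℂ) :
    (l.map fun m => Matrix.diagonal (f m)).prod
      = Matrix.diagonal fun i => (l.map fun m => f m i).prod := by
  induction l with
  | nil => simp
  | cons a t ih =>
      simp only [List.map_cons, List.prod_cons, ih, Matrix.diagonal_mul_diagonal]

/-- `a_n = c_1 ⋯ c_n` is a diagonal matrix `Σ γ_k e_{kk}` whose
entries satisfy `γ_{2k-1} = 2^n γ_{2k}` (here the matrix size is `2^(n+1)`,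
so `n+1` plays the role of `n ≥ 1` of the statement). -/
theorem stmt8 (n : ℕ) :
    ∃ γ : Fin (2 ^ (n + 1)) → ℂ,
      aMat (n + 1) = Matrix.diagonal γ ∧
      ∀ k : Fin (2 ^ n), γ (emb n false k) = (2 ^ (n + 1) : ℂ) * γ (emb n true k) := by
  refine ⟨fun i => ((List.range (n + 1)).map fun m =>
      (if ((i : ℕ) / 2 ^ (n + 1 - (m + 1))) % 2 = 0 then ((2 : ℂ) ^ (m + 1)) else 1)).prod,
      ?_, ?_⟩
  · rw [aMat]
    exact diag_list_prod (List.range (n + 1))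
      (fun m (i : Fin (2 ^ (n + 1))) => if ((i : ℕ) / 2 ^ (n + 1 - (m + 1))) % 2 = 0 then ((2 : ℂ) ^ (m + 1)) else 1)
  · intro k
    simp only [emb, Bool.toNat_false, Bool.toNat_true, add_zero]
    rw [List.range_succ, List.map_append, List.map_append, List.prod_append,
      List.prod_append]
    have hpre : (List.range n).map (fun m =>
        (if ((2 * (k : ℕ)) / 2 ^ (n + 1 - (m + 1))) % 2 = 0 then ((2 : ℂ) ^ (m + 1)) else 1))
        = (List.range n).map (fun m =>
        (if ((2 * (k : ℕ) + 1) / 2 ^ (n + 1 - (m + 1))) % 2 = 0 then ((2 : ℂ) ^ (m + 1)) else 1)) := by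
      apply List.map_congr_left
      intro m hm
      have hm' : m < n := List.mem_range.mp hm
      have ht : n + 1 - (m + 1) = (n - m - 1) + 1 := by omega
      rw [ht]
      have h1 : (2 * (k : ℕ)) / 2 ^ ((n - m - 1) + 1) = (k : ℕ) / 2 ^ (n - m - 1) := by
        rw [pow_succ, mul_comm (2 ^ (n - m - 1)) 2, ← Nat.div_div_eq_div_mul,
          Nat.mul_div_cancel_left _ (by norm_num)]
      have h2 : (2 * (k : ℕ) + 1) / 2 ^ ((n - m - 1) + 1) = (k : ℕ) / 2 ^ (n - m - 1) := by
        rw [pow_succ, mul_comm (2 ^ (n - m - 1)) 2, ← Nat.div_div_eq_div_mul]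
        congr 1
        omega
      rw [h1, h2]
    rw [hpre]
    have hlast0 : n + 1 - (n + 1) = 0 := by omega
    simp only [List.map_cons, List.map_nil, List.prod_cons, List.prod_nil, hlast0, pow_zero,
      Nat.div_one]
    have hA : (2 * (k : ℕ)) % 2 = 0 := by omega
    have hB : (2 * (k : ℕ) + 1) % 2 = 1 := by omega
    rw [hA, hB]
    simp only [if_true, if_pos rfl]
    norm_num
    ring
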